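/- arXiv:0911.5265 — 6 statements merged into one kernel-verified Lean document; each statement's English description precedes it below -/
import Mathlib

section
/- Let k be a positive integer and d an integer with 0 ≤ d ≤ k-1. Define the (k-d)×(k-d) matrix C(k,d) over the rationals with entries C(k,d)_{s,t} = 2^{k-d+s-t} · binomial(k, k-d+s-t) for 1 ≤ s,t ≤ k-d, where binomial(k, m) is taken to be 0 if m > k or m < 0. Then the matrix C(k,d) is invertible (nonsingular). -/
/-!
The rows of `C(k,d) v = 0` say that, with `n = k - d` and `q = ∑ v_t X^t` of degree `< n`, the
product `(1 + 2X)^k q` has no coefficients in degrees `n, …, 2n - 1`; it therefore has at most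
`k` nonzero coefficients while being divisible by `(X + 1/2)^k`. A nonzero polynomial with at
most `k` terms cannot vanish to order `k` at a nonzero point: the operator `X d/dX - e` kills
the term of degree `e` and lowers the order of vanishing by one only. Hence `q = 0`.
-/

open Matrix Finset Polynomial

namespace Polynomial

section CommRing

variable {R : Type*} [CommRing R]

theorem coeff_X_mul_derivative_sub_C_mul (p : R[X]) (e i : ℕ) :
    (X * derivative p - C (e : R) * p).coeff i = ((i : R) - e) * p.coeff i := by
  rw [coeff_sub, coeff_C_mul, sub_mul]
  congr 1
  cases i with
  | zero => simp
  | succ m => rw [coeff_X_mul, coeff_derivative]; push_cast; ring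

theorem support_X_mul_derivative_sub_C_mul_subset (p : R[X]) (e : ℕ) :
    (X * derivative p - C (e : R) * p).support ⊆ p.support.erase e := by
  intro i hi
  rw [mem_support_iff, coeff_X_mul_derivative_sub_C_mul] at hi
  refine mem_erase.mpr ⟨?_, mem_support_iff.mpr (right_ne_zero_of_mul hi)⟩
  rintro rfl
  exact hi (by simp)

theorem eq_zero_of_card_support_le_of_pow_dvd [IsDomain R] [CharZero R] {a : R} (ha : a ≠ 0)
    {k : ℕ} {p : R[X]} (hcard : #p.support ≤ k) (hdvd : (X - C a) ^ k ∣ p) : p = 0 := by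
  induction k generalizing p with
  | zero => simpa using hcard
  | succ k ih =>
    by_contra hp
    obtain ⟨e, he⟩ := nonempty_support_iff.mpr hp
    have hq : X * derivative p - C (e : R) * p = 0 := by
      refine ih ?_ ?_
      · calc #(X * derivative p - C (e : R) * p).support
            ≤ #(p.support.erase e) := card_le_card (support_X_mul_derivative_sub_C_mul_subset p e)
          _ ≤ k := by rw [card_erase_of_mem he]; omega
      · exact dvd_sub ((pow_sub_one_dvd_derivative_of_pow_dvd hdvd).mul_left _)
          (((pow_dvd_pow _ k.le_succ).trans hdvd).mul_left _)
    have hmono : p = monomial e (p.coeff e) := by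
      ext i
      rcases eq_or_ne i e with rfl | hie
      · simp
      · have := congrArg (coeff · i) hq
        simp only [coeff_X_mul_derivative_sub_C_mul, coeff_zero, mul_eq_zero, sub_eq_zero,
          Nat.cast_inj, hie, false_or] at this
        simp [this, coeff_monomial, hie.symm]
    have hroot : X - C a ∣ p := (dvd_pow_self _ k.succ_ne_zero).trans hdvd
    rw [dvd_iff_isRoot, hmono, IsRoot, eval_monomial] at hroot
    exact mem_support_iff.mp he (by simpa [ha] using hroot)

theorem coeff_sum_fin_C_mul_X_pow {n : ℕ} (f : Fin n → R) (i : Fin n) :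
    (∑ j : Fin n, C (f j) * X ^ (j : ℕ)).coeff i = f i := by
  simp [finsetSum_coeff, Fin.val_eq_val]

theorem coeff_mul_sum_fin_C_mul_X_pow {n m : ℕ} (P : R[X]) (f : Fin n → R) (hm : n ≤ m) :
    (P * ∑ j : Fin n, C (f j) * X ^ (j : ℕ)).coeff m = ∑ j : Fin n, P.coeff (m - j) * f j := by
  simp only [mul_sum, finsetSum_coeff]
  refine sum_congr rfl fun j _ => ?_
  rw [mul_left_comm, coeff_C_mul, ← mul_comm, coeff_mul_X_pow', if_pos (by omega)]

theorem coeff_one_add_C_mul_X_pow (r : R) (k m : ℕ) :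
    ((1 + C r * X) ^ k).coeff m = r ^ m * k.choose m := by
  have : (1 + C r * X) ^ k = ((1 + X) ^ k).comp (C r * X) := by simp
  rw [this, comp_C_mul_X_coeff, coeff_one_add_X_pow, mul_comm]

end CommRing

section Field

variable {K : Type*} [Field K] [CharZero K]

theorem eq_zero_of_coeff_mul_eq_zero {P q : K[X]} {a : K} {k n : ℕ} (ha : a ≠ 0) (hP : P ≠ 0)
    (hPdeg : P.natDegree ≤ k) (hdvd : (X - C a) ^ k ∣ P) (hn : n ≤ k) (hq : q.degree < n)
    (hcoeff : ∀ m, n ≤ m → m < 2 * n → (P * q).coeff m = 0) : q = 0 := by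
  have hdeg : (P * q).degree < ↑(k + n) := by
    refine (degree_mul_le _ _).trans_lt ?_
    rw [Nat.cast_add]
    exact WithBot.add_lt_add_of_le_of_lt (degree_ne_bot.mpr hP)
      (degree_le_of_natDegree_le hPdeg) hq
  have hsupp : (P * q).support ⊆ range n ∪ Ico (2 * n) (k + n) := by
    intro m hm
    have hlt : m < k + n := by
      by_contra! h
      exact mem_support_iff.mp hm
        (coeff_eq_zero_of_degree_lt (hdeg.trans_le (by exact_mod_cast h)))
    simp only [mem_union, mem_range, mem_Ico]
    by_contra! hout
    exact mem_support_iff.mp hm (hcoeff m hout.1 (by omega))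
  have hcard : #(P * q).support ≤ k :=
    calc #(P * q).support ≤ #(range n) + #(Ico (2 * n) (k + n)) :=
          (card_le_card hsupp).trans (card_union_le _ _)
      _ ≤ k := by simp only [card_range, Nat.card_Ico]; omega
  exact (mul_eq_zero.mp (eq_zero_of_card_support_le_of_pow_dvd ha hcard
    (hdvd.mul_right q))).resolve_left hP

theorem isUnit_matrix_coeff_add_sub {P : K[X]} {a : K} {k n : ℕ} (ha : a ≠ 0) (hP : P ≠ 0)
    (hPdeg : P.natDegree ≤ k) (hdvd : (X - C a) ^ k ∣ P) (hn : n ≤ k) :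
    IsUnit (Matrix.of fun s t : Fin n => P.coeff (n + s - t)) := by
  rw [← mulVec_injective_iff_isUnit]
  refine (injective_iff_map_eq_zero (mulVecLin _)).mpr fun v hv => ?_
  have hq : ∑ j : Fin n, C (v j) * X ^ (j : ℕ) = 0 := by
    refine eq_zero_of_coeff_mul_eq_zero ha hP hPdeg hdvd hn (degree_sum_fin_lt v)
      fun m hm hm2 => ?_
    have hrow := congrFun hv ⟨m - n, by omega⟩
    simp only [mulVecLin_apply, mulVec, dotProduct, of_apply, Nat.add_sub_cancel' hm,
      Pi.zero_apply] at hrow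
    rwa [coeff_mul_sum_fin_C_mul_X_pow P v hm]
  funext i
  simpa only [coeff_sum_fin_C_mul_X_pow, coeff_zero, Pi.zero_apply] using congrArg (coeff · i) hq

end Field

end Polynomial

theorem matC_invertible_general (k d : ℕ) :
    IsUnit (Matrix.of fun s t : Fin (k - d) =>
      ((2 ^ (k - d + s.val - t.val) * Nat.choose k (k - d + s.val - t.val) : ℕ) : ℚ)) := by
  have hfactor : (1 + C 2 * X : ℚ[X]) = C 2 * (X - C (-1 / 2)) := by
    rw [mul_sub, ← C_mul]; norm_num; ring
  have hne : (1 + C 2 * X : ℚ[X]) ^ k ≠ 0 :=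
    pow_ne_zero _ (hfactor ▸ mul_ne_zero (by simp) (X_sub_C_ne_zero _))
  have hdeg : ((1 + C 2 * X : ℚ[X]) ^ k).natDegree ≤ k := by compute_degree!
  have hdvd : (X - C (-1 / 2 : ℚ)) ^ k ∣ (1 + C 2 * X) ^ k := by
    rw [hfactor, mul_pow]
    exact dvd_mul_left _ _
  convert isUnit_matrix_coeff_add_sub (by norm_num) hne hdeg hdvd (Nat.sub_le k d) using 4 with s t
  rw [coeff_one_add_C_mul_X_pow]
  push_cast
  rfl

/-- The matrix `𝐂(k,d)` with entries `𝐂(k,d)_{s,t} = 2^{k-d+s-t} · C(k, k-d+s-t)`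
(for `1 ≤ s,t ≤ k-d`, here written with 0-based indices in `Fin (k-d)`;
note `C(k,m) = 0` for `m > k`) is invertible, for every `k ≥ 1` and `0 ≤ d ≤ k-1`. -/
theorem matC_invertible (k d : ℕ) (hk : 0 < k) (hd : d ≤ k - 1) :
    IsUnit (Matrix.of fun s t : Fin (k - d) =>
      ((2 ^ (k - d + s.val - t.val) * Nat.choose k (k - d + s.val - t.val) : ℕ) : ℚ)) :=
  matC_invertible_general k d
end

section
/- Let k be a positive integer and d an integer with 1 ≤ d ≤ k-1, and set k_d = k - d. Define the k_d × k_d matrix C̃(k,d) with entries C̃(k,d)_{s,t} = binomial(k, k_d + s - t) for 1 ≤ s,t ≤ k_d (with the convention that binomial(k, m) = 0 for m > k or m < 0). Then the determinant of C̃(k,d) is nonzero. -/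
/-!
If `v` is in the kernel of the matrix, let `p` be the polynomial of degree `< a` with coefficient
vector `v` (here `a = k - d`). The kernel equations say that `q = (X + 1)^k * p` has vanishing
coefficients in degrees `a, …, 2a - 1`. Hence the `a`-th derivative of `q` is divisible by `X^a`
and by `(X + 1)^(k - a)`, so by a polynomial of degree `k`, while its own degree is
`deg q - a < k`; it therefore vanishes. In characteristic zero this forces `deg q < a ≤ k`,
contradicting `deg q ≥ k` unless `p = 0`.
-/

open Matrix Finset

namespace Polynomial

variable {R : Type*}

theorem X_pow_dvd_iterate_derivative_of_coeff_eq_zero [Semiring R] {p : R[X]} {m n : ℕ}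
    (h : ∀ i < n, p.coeff (i + m) = 0) : X ^ n ∣ derivative^[m] p := by
  rw [X_pow_dvd_iff]
  intro i hi
  rw [coeff_iterate_derivative, h i hi, smul_zero]

theorem natDegree_lt_of_iterate_derivative_eq_zero [Semiring R] [NoZeroDivisors R] [CharZero R]
    {p : R[X]} {m : ℕ} (hp : p ≠ 0) (h : derivative^[m] p = 0) : p.natDegree < m := by
  by_contra! hm
  have hcoeff := coeff_iterate_derivative (k := m) p (p.natDegree - m)
  rw [h, coeff_zero, Nat.sub_add_cancel hm, eq_comm, nsmul_eq_mul, mul_eq_zero] at hcoeff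
  refine hcoeff.elim (fun hd => ?_) (leadingCoeff_ne_zero.mpr hp)
  exact absurd (Nat.descFactorial_eq_zero_iff_lt.mp (by exact_mod_cast hd)) (by omega)

theorem coeff_X_add_one_pow_mul_ofFn [CommSemiring R] [DecidableEq R] (k a : ℕ) (v : Fin a → R)
    (s : ℕ) :
    ((X + 1) ^ k * ofFn a v).coeff (a + s) = ∑ t : Fin a, (k.choose (a + s - t) : R) * v t := by
  rw [ofFn_eq_sum_monomial, mul_sum, finsetSum_coeff]
  refine sum_congr rfl fun t _ => ?_
  conv_lhs => rw [← Nat.sub_add_cancel (by omega : (t : ℕ) ≤ a + s)]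
  rw [coeff_mul_monomial, coeff_X_add_one_pow]

theorem eq_zero_of_coeff_X_add_one_pow_mul_eq_zero [CommRing R] [NoZeroDivisors R] [CharZero R]
    {k a : ℕ} (hak : a ≤ k) {p : R[X]}
    (hp : p.degree < a) (h : ∀ i < a, ((X + 1) ^ k * p).coeff (a + i) = 0) : p = 0 := by
  by_contra hp0
  have hpa : p.natDegree < a := (natDegree_lt_iff_degree_lt hp0).mpr hp
  set q := (X + 1) ^ k * p
  have hmonic : (X + 1 : R[X]).Monic := by simpa using monic_X_add_C (1 : R)
  have hdeg : (X + 1 : R[X]).natDegree = 1 := by simpa using natDegree_X_add_C (1 : R)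
  have hq0 : q ≠ 0 := mul_ne_zero (hmonic.pow k).ne_zero hp0
  have hqdeg : q.natDegree = k + p.natDegree := by
    rw [natDegree_mul (hmonic.pow k).ne_zero hp0, hmonic.natDegree_pow, hdeg, mul_one]
  have hdvd : X ^ a * (X + 1) ^ (k - a) ∣ derivative^[a] q := by
    refine IsCoprime.mul_dvd (IsCoprime.pow ⟨-1, 1, by ring⟩) ?_
      (pow_sub_dvd_iterate_derivative_of_pow_dvd a (dvd_mul_right _ _))
    exact X_pow_dvd_iterate_derivative_of_coeff_eq_zero fun i hi => by rw [add_comm]; exact h i hi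
  have hr : derivative^[a] q = 0 := by
    refine eq_zero_of_dvd_of_natDegree_lt hdvd ?_
    rw [(monic_X_pow a).natDegree_mul (hmonic.pow _), natDegree_X_pow, hmonic.natDegree_pow,
      hdeg]
    have := natDegree_iterate_derivative q a
    omega
  have := natDegree_lt_of_iterate_derivative_eq_zero hq0 hr
  omega

end Polynomial

open Polynomial in
theorem Matrix.det_of_choose_sub_ne_zero {R : Type*} [CommRing R] [IsDomain R] [CharZero R]
    {k a : ℕ} (hak : a ≤ k) :
    (of fun s t : Fin a => (k.choose (a + s - t) : R)).det ≠ 0 := by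
  classical
  intro hdet
  obtain ⟨v, hv, hmv⟩ := exists_mulVec_eq_zero_iff.mpr hdet
  refine hv (injective_ofFn a ?_)
  rw [map_zero]
  refine eq_zero_of_coeff_X_add_one_pow_mul_eq_zero hak (ofFn_degree_lt v) fun i hi => ?_
  rw [coeff_X_add_one_pow_mul_ofFn]
  exact congrFun hmv ⟨i, hi⟩

theorem matCtilde_det_ne_zero_general (k d : ℕ) :
    (Matrix.of fun s t : Fin (k - d) =>
      ((Nat.choose k (k - d + s.val - t.val) : ℕ) : ℚ)).det ≠ 0 :=
  det_of_choose_sub_ne_zero (Nat.sub_le k d)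

/-- The matrix `C̃(k,d)` with entries `C̃(k,d)_{s,t} = C(k, k_d + s - t)`, `k_d = k - d`,
(for `1 ≤ s,t ≤ k_d`, here with 0-based indices in `Fin (k-d)`; `C(k,m) = 0` for `m > k`)
has nonzero determinant, for `1 ≤ d ≤ k-1`. -/
theorem matCtilde_det_ne_zero (k d : ℕ) (hd1 : 1 ≤ d) (hd2 : d ≤ k - 1) :
    (Matrix.of fun s t : Fin (k - d) =>
      ((Nat.choose k (k - d + s.val - t.val) : ℕ) : ℚ)).det ≠ 0 :=
  matCtilde_det_ne_zero_general k d
end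

section
/- Let k_d ≥ 1 and k ≥ 1 be integers. The matrix D_3 with entries D_3(s,t) = binomial(k_d + s - 1, k_d + s - t) for 1 ≤ s, t ≤ k_d has determinant 1. Equivalently, D_3 can be reduced by elementary row operations to an upper triangular matrix with all diagonal entries equal to 1. -/
/-!
Factor the matrix as `P * T`, where `P(s, r) = C(s, r)` is the lower unitriangular Pascal matrix
and `T(r, t) = C(k_d, t - r)` (zero below the diagonal) is upper unitriangular; the entries of
the product are `∑_r C(s, r) C(k_d, t - r) = C(k_d + s, t)` by Vandermonde's identity.
Both factors have determinant `1`.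
-/

open Matrix Finset

variable (R : Type*)

def pascalMatrix [NatCast R] (n : ℕ) : Matrix (Fin n) (Fin n) R :=
  of fun i j => (i.val.choose j.val : R)

def upperBinomialToeplitz [NatCast R] [Zero R] (m n : ℕ) : Matrix (Fin n) (Fin n) R :=
  of fun i j => if i ≤ j then (m.choose (j.val - i.val) : R) else 0

variable {R}

theorem det_pascalMatrix [CommRing R] (n : ℕ) : (pascalMatrix R n).det = 1 := by
  have hlower : (pascalMatrix R n).IsLowerTriangular := fun i j (hij : i < j) => by
    simp [pascalMatrix, Nat.choose_eq_zero_of_lt hij]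
  rw [det_of_isLowerTriangular _ hlower]
  simp [pascalMatrix]

theorem det_upperBinomialToeplitz [CommRing R] (m n : ℕ) :
    (upperBinomialToeplitz R m n).det = 1 := by
  have hupper : (upperBinomialToeplitz R m n).IsUpperTriangular := fun i j (hij : j < i) => by
    simp [upperBinomialToeplitz, not_le.mpr hij]
  rw [det_of_isUpperTriangular hupper]
  simp [upperBinomialToeplitz]

theorem pascalMatrix_mul_upperBinomialToeplitz [NonAssocSemiring R] (m n : ℕ) :
    pascalMatrix R n * upperBinomialToeplitz R m n =
      of fun s t : Fin n => ((m + s.val).choose t.val : R) := by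
  ext s t
  have hsupport : range (t.val + 1) ⊆ range n := range_subset_range.mpr t.isLt
  calc (pascalMatrix R n * upperBinomialToeplitz R m n) s t
      = ∑ r ∈ range n, if r ≤ t.val then ((s.val.choose r * m.choose (t.val - r) : ℕ) : R)
          else 0 := by
        simp only [mul_apply, pascalMatrix, upperBinomialToeplitz, of_apply, Fin.le_def,
          mul_ite, mul_zero, Nat.cast_mul]
        exact Fin.sum_univ_eq_sum_range
          (fun r => if r ≤ t.val then (s.val.choose r : R) * m.choose (t.val - r) else 0) n
    _ = ∑ r ∈ range (t.val + 1), ((s.val.choose r * m.choose (t.val - r) : ℕ) : R) := by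
        rw [← sum_subset hsupport fun r _ hr => if_neg (by simpa [Nat.lt_succ_iff] using hr)]
        exact sum_congr rfl fun r hr => if_pos (Nat.lt_succ_iff.mp (mem_range.mp hr))
    _ = ((m + s.val).choose t.val : R) := by
        rw [← Nat.cast_sum, Nat.add_comm m, Nat.add_choose_eq,
          Nat.sum_antidiagonal_eq_sum_range_succ_mk]

/-- Indexing is 0-based: entry `(s, t)` is the paper's `D₃(s + 1, t + 1)`. -/
theorem matD3_det_eq_one_general (kd : ℕ) :
    (Matrix.of fun s t : Fin kd =>
      ((Nat.choose (kd + s.val) (kd + s.val - t.val) : ℕ) : ℚ)).det = 1 := by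
  have hsymm : ∀ s t : Fin kd, (kd + s.val).choose (kd + s.val - t.val) = (kd + s.val).choose t :=
    fun s t => Nat.choose_symm (t.isLt.le.trans (Nat.le_add_right _ _))
  simp_rw [hsymm, ← pascalMatrix_mul_upperBinomialToeplitz, det_mul, det_pascalMatrix,
    det_upperBinomialToeplitz, mul_one]

/-- The matrix `D₃` with entries `D₃(s,t) = C(k_d + s - 1, k_d + s - t)` for
`1 ≤ s,t ≤ k_d` (here 0-based: `D₃(s,t) = C(k_d + s, k_d + s - t)` for `s,t : Fin k_d`)
has determinant `1`. -/
theorem matD3_det_eq_one (k kd : ℕ) (hkd : 1 ≤ kd) (hk : 1 ≤ k) :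
    (Matrix.of fun s t : Fin kd =>
      ((Nat.choose (kd + s.val) (kd + s.val - t.val) : ℕ) : ℚ)).det = 1 :=
  matD3_det_eq_one_general kd
end

section
/- Let k_d, k ≥ 1. The matrix D_2 with entries D_2(s,t) = 1/(k_d + s - t)! for 1 ≤ s, t ≤ k_d (with the convention 1/m! = 0 when m < 0) has nonzero determinant; indeed det D_2 equals det D_3 divided by the product over s of (k_d+s-1)! times the product over t of (t-1)!, where D_3(s,t) = binomial(k_d + s - 1, k_d + s - t). -/
/-!
Since `(m + s).choose t * t! * (m + s - t)! = (m + s)!`, the matrix `1 / (m + s - t)!` is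
`diag (1 / (m + s)!) * [(m + s).choose t] * diag (t!)`. Vandermonde's identity
`(s + m).choose t = ∑ j, s.choose j * m.choose (t - j)` factors `[(m + s).choose t]` as the
lower unitriangular Pascal matrix times an upper unitriangular one, so its determinant is `1`.
-/

open Matrix Finset

theorem Nat.add_choose_eq_sum_fin {n : ℕ} (s m : ℕ) (t : Fin n) :
    (s + m).choose t = ∑ j : Fin n, s.choose j * if j.val ≤ t.val then m.choose (t - j) else 0 := by
  rw [Nat.add_choose_eq, Finset.Nat.sum_antidiagonal_eq_sum_range_succ_mk,
    Fin.sum_univ_eq_sum_range (fun j => s.choose j * if j ≤ t.val then m.choose (t - j) else 0),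
    ← Finset.sum_subset (Finset.range_subset_range.2 t.isLt)]
  · refine Finset.sum_congr rfl fun j hj => ?_
    rw [if_pos (Nat.lt_succ_iff.mp (Finset.mem_range.mp hj))]
  · intro j _ hj
    rw [if_neg fun h => hj (Finset.mem_range.mpr (Nat.lt_succ_of_le h)), mul_zero]

theorem Matrix.det_of_choose_add {R : Type*} [CommRing R] (n m : ℕ) :
    (of fun s t : Fin n => ((m + s.val).choose t : R)).det = 1 := by
  have pascal_mul : (of fun s t : Fin n => ((m + s.val).choose t : R))
      = (of fun s j : Fin n => (s.val.choose j : R))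
        * of fun j t : Fin n => if j.val ≤ t.val then (m.choose (t - j) : R) else 0 := by
    ext s t
    simp only [mul_apply, of_apply, add_comm m, Nat.add_choose_eq_sum_fin s m t, Nat.cast_sum,
      Nat.cast_mul, Nat.cast_ite, Nat.cast_zero]
  have lower : (of fun s j : Fin n => (s.val.choose j : R)).det = 1 := by
    rw [det_of_isLowerTriangular _ fun i j (hij : i < j) => by
      simp [Nat.choose_eq_zero_of_lt (Fin.lt_def.mp hij)]]
    simp
  have upper : (of fun j t : Fin n => if j.val ≤ t.val then (m.choose (t - j) : R) else 0).det = 1 := by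
    rw [det_of_isUpperTriangular fun i j (hij : j < i) => by simp [not_le.mpr hij]]
    simp
  rw [pascal_mul, det_mul, lower, upper, one_mul]

theorem Matrix.det_of_inv_factorial_sub {K : Type*} [Field K] [CharZero K] {n m : ℕ}
    (hnm : n ≤ m + 1) :
    (of fun s t : Fin n => 1 / ((m + s.val - t).factorial : K)).det
      = (∏ t : Fin n, (t.val.factorial : K)) / ∏ s : Fin n, ((m + s.val).factorial : K) := by
  have diag_mul : (of fun s t : Fin n => 1 / ((m + s.val - t).factorial : K))
      = diagonal (fun s : Fin n => ((m + s.val).factorial : K)⁻¹)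
        * (of fun s t : Fin n => ((m + s.val).choose t : K))
        * diagonal (fun t : Fin n => (t.val.factorial : K)) := by
    ext s t
    have hts : t.val ≤ m + s.val := by omega
    have hfac : ((m + s.val).choose t * t.val.factorial * (m + s.val - t).factorial : K)
        = (m + s.val).factorial := by
      exact_mod_cast Nat.choose_mul_factorial_mul_factorial hts
    have hchoose : ((m + s.val).choose t : K) ≠ 0 := mod_cast (Nat.choose_pos hts).ne'
    have htfac : (t.val.factorial : K) ≠ 0 := mod_cast t.val.factorial_ne_zero
    rw [mul_diagonal, diagonal_mul, of_apply, of_apply, ← hfac]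
    field_simp
  rw [diag_mul, det_mul, det_mul, det_diagonal, det_diagonal, det_of_choose_add, mul_one,
    prod_inv_distrib, inv_mul_eq_div]

theorem matD2_det_ne_zero_general (kd : ℕ) :
    (Matrix.of fun s t : Fin kd =>
        (1 / (Nat.factorial (kd + s.val - t.val) : ℚ))).det ≠ 0
    ∧ (Matrix.of fun s t : Fin kd =>
        (1 / (Nat.factorial (kd + s.val - t.val) : ℚ))).det
      = (Matrix.of fun s t : Fin kd =>
          ((Nat.choose (kd + s.val) (kd + s.val - t.val) : ℕ) : ℚ)).det
        * (∏ t : Fin kd, (Nat.factorial t.val : ℚ))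
        / (∏ s : Fin kd, (Nat.factorial (kd + s.val) : ℚ)) := by
  have det_D3 : (Matrix.of fun s t : Fin kd =>
      ((Nat.choose (kd + s.val) (kd + s.val - t.val) : ℕ) : ℚ)).det = 1 := by
    rw [← det_of_choose_add kd kd]
    congr 1
    ext s t
    rw [of_apply, of_apply, Nat.choose_symm (by omega)]
  rw [det_D3, one_mul, det_of_inv_factorial_sub (by omega)]
  exact ⟨by positivity, rfl⟩

/-- The matrix `D₂` with entries `D₂(s,t) = 1/(k_d + s - t)!` for `1 ≤ s,t ≤ k_d`
(here 0-based, the argument `k_d + s - t ≥ 1` is always nonnegative) has nonzero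
determinant; indeed `det D₂ = det D₃ · (∏_t (t-1)!) / (∏_s (k_d+s-1)!)` where
`D₃(s,t) = C(k_d + s - 1, k_d + s - t)`. -/
theorem matD2_det_ne_zero (k kd : ℕ) (hkd : 1 ≤ kd) (hk : 1 ≤ k) :
    (Matrix.of fun s t : Fin kd =>
        (1 / (Nat.factorial (kd + s.val - t.val) : ℚ))).det ≠ 0
    ∧ (Matrix.of fun s t : Fin kd =>
        (1 / (Nat.factorial (kd + s.val - t.val) : ℚ))).det
      = (Matrix.of fun s t : Fin kd =>
          ((Nat.choose (kd + s.val) (kd + s.val - t.val) : ℕ) : ℚ)).det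
        * (∏ t : Fin kd, (Nat.factorial t.val : ℚ))
        / (∏ s : Fin kd, (Nat.factorial (kd + s.val) : ℚ)) :=
  matD2_det_ne_zero_general kd
end

section
/- On ℝ, for the operator P = (d/dx)^{2k} and a first-order operator S = φ·(d/dx) + ψ with smooth coefficients: S is a symmetry of P (i.e. P∘S = S'∘P for some differential operator S') only if φ^{(2k+1)} = 0, i.e. φ is a polynomial of degree at most 2k. -/
open Finset

/-- Iterated derivatives of a smooth function are differentiable. -/
lemma aux_itd_diff (f : ℝ → ℝ) (hf : ContDiff ℝ (⊤ : ℕ∞) f) (m : ℕ) :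
    Differentiable ℝ (iteratedDeriv m f) := by
  rw [iteratedDeriv_eq_iterate]
  have h : ContDiff ℝ (⊤ : ℕ∞) f := hf.of_le (by simp)
  exact (h.iterate_deriv m).differentiable (by simp)

/-- Iterated derivatives of the zero function vanish. -/
lemma aux_itd_zero (m : ℕ) : iteratedDeriv m (fun _ : ℝ => (0 : ℝ)) = fun _ => 0 := by
  induction m with
  | zero => simp [iteratedDeriv_zero]
  | succ n ih => rw [iteratedDeriv_succ', deriv_const']; exact ih

/-- Iterated derivatives of a constant function of positive order vanish. -/
lemma aux_itd_const (c : ℝ) (n : ℕ) (hn : 0 < n) :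
    iteratedDeriv n (fun _ : ℝ => c) = fun _ => 0 := by
  obtain ⟨m, rfl⟩ : ∃ m, n = m + 1 := ⟨n - 1, by omega⟩
  rw [iteratedDeriv_succ', deriv_const']
  exact aux_itd_zero m

/-- Iterated derivatives are additive for smooth functions. -/
lemma aux_itd_add (f g : ℝ → ℝ) (hf : ContDiff ℝ (⊤ : ℕ∞) f) (hg : ContDiff ℝ (⊤ : ℕ∞) g) (n : ℕ) :
    iteratedDeriv n (fun y => f y + g y)
      = fun x => iteratedDeriv n f x + iteratedDeriv n g x := by
  induction n with
  | zero => simp [iteratedDeriv_zero]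
  | succ n ih =>
    rw [iteratedDeriv_succ, ih]
    funext x
    rw [deriv_fun_add ((aux_itd_diff f hf n) x) ((aux_itd_diff g hg n) x),
      ← iteratedDeriv_succ, ← iteratedDeriv_succ]

/-- Leibniz rule for multiplication by the identity. -/
lemma aux_itd_mul_id (ψ : ℝ → ℝ) (hψ : ContDiff ℝ (⊤ : ℕ∞) ψ) (n : ℕ) :
    iteratedDeriv (n + 1) (fun y => ψ y * y)
      = fun x => iteratedDeriv (n + 1) ψ x * x + (n + 1) * iteratedDeriv n ψ x := by
  induction n with
  | zero =>
    funext x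
    rw [iteratedDeriv_one]
    rw [deriv_fun_mul ((hψ.differentiable (by simp)) x) differentiableAt_fun_id]
    simp [iteratedDeriv_one, iteratedDeriv_zero]
  | succ n ih =>
    rw [iteratedDeriv_succ, ih]
    funext x
    have h1 : DifferentiableAt ℝ (fun x => iteratedDeriv (n + 1) ψ x * x) x :=
      ((aux_itd_diff ψ hψ (n + 1)) x).mul differentiableAt_fun_id
    have h2 : DifferentiableAt ℝ (fun x => ((n : ℝ) + 1) * iteratedDeriv n ψ x) x :=
      ((aux_itd_diff ψ hψ n) x).const_mul _
    rw [deriv_fun_add h1 h2,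
      deriv_fun_mul ((aux_itd_diff ψ hψ (n + 1)) x) differentiableAt_fun_id,
      deriv_const_mul _ ((aux_itd_diff ψ hψ n) x)]
    simp only [← iteratedDeriv_succ, deriv_id'']
    push_cast
    ring

/-- One-dimensional analogue of the generalised conformal Killing equation: if the
first-order operator `S = φ·(d/dx) + ψ` (smooth coefficients) is a symmetry of
`P = (d/dx)^{2k}`, i.e. `P∘S = S'∘P` for some linear differential operator `S'`
with smooth coefficients, then `φ^{(2k+1)} = 0`, i.e. `φ` is a polynomial of degree
at most `2k`. -/
theorem first_order_symmetry_coefficient_polynomial (k : ℕ) (hk : 0 < k)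
    (φ ψ : ℝ → ℝ) (hφ : ContDiff ℝ (⊤ : ℕ∞) φ) (hψ : ContDiff ℝ (⊤ : ℕ∞) ψ)
    (hsymm : ∃ (M : ℕ) (c : ℕ → ℝ → ℝ), (∀ m, ContDiff ℝ (⊤ : ℕ∞) (c m)) ∧
      ∀ f : ℝ → ℝ, ContDiff ℝ (⊤ : ℕ∞) f → ∀ x : ℝ,
        iteratedDeriv (2 * k) (fun y => φ y * deriv f y + ψ y * f y) x
          = ∑ m ∈ Finset.range (M + 1),
              c m x * iteratedDeriv m (iteratedDeriv (2 * k) f) x) :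
    ∀ x : ℝ, iteratedDeriv (2 * k + 1) φ x = 0 := by
  obtain ⟨M, c, hc, H⟩ := hsymm
  -- Step 1: apply the symmetry identity to f = 1 to get ψ^{(2k)} = 0.
  have hψ2k : iteratedDeriv (2 * k) ψ = fun _ => 0 := by
    funext x
    have h1 := H (fun _ => 1) contDiff_const x
    rw [aux_itd_const 1 (2 * k) (by omega)] at h1
    simp only [aux_itd_zero, deriv_const', mul_zero, mul_one, zero_add, mul_zero,
      Finset.sum_const_zero] at h1
    exact h1
  have hψ2k1 : iteratedDeriv (2 * k + 1) ψ = fun _ => 0 := by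
    rw [iteratedDeriv_succ, hψ2k, deriv_const']
  -- Step 2: apply the symmetry identity to f = id to get (φ + x·ψ)^{(2k)} = 0.
  have hg2k : iteratedDeriv (2 * k) (fun y => φ y + ψ y * y) = fun _ => 0 := by
    funext x
    have h2 := H (fun y => y) contDiff_id x
    have hid : iteratedDeriv (2 * k) (fun y : ℝ => y) = fun _ => 0 := by
      obtain ⟨j, hj⟩ : ∃ j, 2 * k = j + 1 + 1 := ⟨2 * k - 2, by omega⟩
      rw [hj, iteratedDeriv_succ', deriv_id'']
      exact aux_itd_const 1 (j + 1) (by omega)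
    rw [hid] at h2
    simp only [aux_itd_zero, deriv_id'', mul_one, mul_zero, Finset.sum_const_zero] at h2
    exact h2
  have hg2k1 : iteratedDeriv (2 * k + 1) (fun y => φ y + ψ y * y) = fun _ => 0 := by
    rw [iteratedDeriv_succ, hg2k, deriv_const']
  -- Step 3: combine via additivity and the Leibniz rule for ψ·id.
  intro x
  have hmul : ContDiff ℝ (⊤ : ℕ∞) (fun y : ℝ => ψ y * y) := hψ.mul contDiff_id
  have hadd := aux_itd_add φ (fun y => ψ y * y) hφ hmul (2 * k + 1)
  have hleib := aux_itd_mul_id ψ hψ (2 * k)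
  have h0 := congrFun hg2k1 x
  rw [hadd] at h0
  have hl := congrFun hleib x
  simp only [hl, congrFun hψ2k x, congrFun hψ2k1 x] at h0
  simpa using h0
end

section
/- Let N ≥ 3 and let V = ℝ^N with a nondegenerate symmetric bilinear form h. For any G ∈ ⊙^{2k}V totally symmetric and trace-free, the tensor F^{A₁⁰A₁¹...A_{2k}⁰A_{2k}¹} := G^{A₁⁰...A_{2k}⁰} h^{(A₁¹A₂¹} ⋯ h^{A_{2k-1}¹A_{2k}¹)}, implicitly skew-symmetrized over each pair A_i⁰A_i¹, is symmetric under any interchange of the form-index pairs 𝐀_i ↔ 𝐀_j. -/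
open Finset

namespace Stmt16

/-- The symmetrized product `h^{(A₁¹A₂¹ ⋯ A_{2k-1}¹A_{2k}¹)}` of `k` copies of `h`
over `2k` slots. -/
noncomputable def symH (N k : ℕ) (h : Matrix (Fin N) (Fin N) ℝ)
    (w : Fin (2 * k) → Fin N) : ℝ :=
  (1 / ((2 * k).factorial : ℝ)) *
    ∑ σ : Equiv.Perm (Fin (2 * k)), ∏ l : Fin k,
      h (w (σ ⟨2 * l.val, by have := l.isLt; omega⟩))
        (w (σ ⟨2 * l.val + 1, by have := l.isLt; omega⟩))

/-- `F^{A₁⁰A₁¹…A_{2k}⁰A_{2k}¹} := G^{A₁⁰…A_{2k}⁰}·h^{(A₁¹⋯A_{2k}¹)}`, skew-symmetrized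
over each index pair `A_i⁰A_i¹`;  here `v` lists the `A_i⁰` and `w` the `A_i¹`. -/
noncomputable def F (N k : ℕ) (h : Matrix (Fin N) (Fin N) ℝ)
    (G : (Fin (2 * k) → Fin N) → ℝ)
    (v w : Fin (2 * k) → Fin N) : ℝ :=
  ((1 : ℝ) / 2) ^ (2 * k) *
    ∑ ε : Fin (2 * k) → Bool,
      (∏ i : Fin (2 * k), (if ε i then (-1 : ℝ) else 1)) *
        G (fun i => if ε i then w i else v i) *
        symH N k h (fun i => if ε i then v i else w i)

end Stmt16

open Stmt16

/-
Both factors of `F` are symmetric tensors, so permuting the pairs `(vᵢ, wᵢ)` by `σ` and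
reindexing the skew-symmetrization choices `ε` by the same `σ` leaves every summand unchanged.
-/

theorem Stmt16.symH_comp_perm (N k : ℕ) (h : Matrix (Fin N) (Fin N) ℝ)
    (u : Fin (2 * k) → Fin N) (τ : Equiv.Perm (Fin (2 * k))) :
    symH N k h (u ∘ τ) = symH N k h u := by
  unfold symH
  congr 1
  exact Fintype.sum_equiv (Equiv.mulLeft τ) _ _ fun σ => rfl

theorem Stmt16.F_comp_perm (N k : ℕ) (h : Matrix (Fin N) (Fin N) ℝ)
    (G : (Fin (2 * k) → Fin N) → ℝ)
    (hGsym : ∀ (u : Fin (2 * k) → Fin N) (σ : Equiv.Perm (Fin (2 * k))), G (u ∘ σ) = G u)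
    (v w : Fin (2 * k) → Fin N) (σ : Equiv.Perm (Fin (2 * k))) :
    F N k h G (v ∘ σ) (w ∘ σ) = F N k h G v w := by
  unfold F
  congr 1
  rw [← Equiv.sum_comp (Equiv.arrowCongr σ.symm (Equiv.refl Bool))]
  refine Fintype.sum_congr _ _ fun ε => ?_
  have hε : Equiv.arrowCongr σ.symm (Equiv.refl Bool) ε = ε ∘ σ := by
    ext; simp
  have hsign := Equiv.prod_comp σ (fun i => if ε i then (-1 : ℝ) else 1)
  have hG := hGsym (fun i => if ε i then w i else v i) σ
  have hH := symH_comp_perm N k h (fun i => if ε i then v i else w i) σ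
  rw [hε]
  exact congr_arg₂ _ (congr_arg₂ _ hsign hG) hH

theorem F_symmetric_under_pair_interchange_general (N k : ℕ)
    (h : Matrix (Fin N) (Fin N) ℝ)
    (G : (Fin (2 * k) → Fin N) → ℝ)
    (hGsym : ∀ (u : Fin (2 * k) → Fin N) (σ : Equiv.Perm (Fin (2 * k))),
      G (u ∘ σ) = G u) :
    ∀ (v w : Fin (2 * k) → Fin N) (i j : Fin (2 * k)),
      F N k h G (v ∘ Equiv.swap i j) (w ∘ Equiv.swap i j) = F N k h G v w :=
  fun v w i j => F_comp_perm N k h G hGsym v w (Equiv.swap i j)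

/-- Let `N ≥ 3`, `V = ℝᴺ` with nondegenerate symmetric bilinear form `h`. For `G` a
totally symmetric trace-free `2k`-tensor, the tensor
`F := G^{A₁⁰…A_{2k}⁰} h^{(A₁¹⋯A_{2k}¹)}`, skew-symmetrized over each pair `A_i⁰A_i¹`,
is symmetric under any interchange of the form-index pairs `𝐀_i ↔ 𝐀_j`. -/
theorem F_symmetric_under_pair_interchange (N k : ℕ) (hN : 3 ≤ N) (hk : 0 < k)
    (h : Matrix (Fin N) (Fin N) ℝ) (hsym : h.IsSymm) (hnd : IsUnit h)
    (G : (Fin (2 * k) → Fin N) → ℝ)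
    (hGsym : ∀ (u : Fin (2 * k) → Fin N) (σ : Equiv.Perm (Fin (2 * k))),
      G (u ∘ σ) = G u)
    (hGtf : ∀ (u : Fin (2 * k) → Fin N) (a b : Fin (2 * k)), a ≠ b →
      ∑ p : Fin N, ∑ q : Fin N,
        h p q * G (Function.update (Function.update u a p) b q) = 0) :
    ∀ (v w : Fin (2 * k) → Fin N) (i j : Fin (2 * k)),
      F N k h G (v ∘ Equiv.swap i j) (w ∘ Equiv.swap i j) = F N k h G v w :=
  F_symmetric_under_pair_interchange_general N k h G hGsym
end
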